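/- arXiv:1412.8114 — 2 statements merged into one kernel-verified Lean document; each statement's English description precedes it below -/
import Mathlib

section
/- Let G = ([n], E) be a finite simple graph and k a field. Then the set of exponent vectors { a ∈ ℕ^n : x^a ∉ T_G } (the standard monomials of the tree ideal T_G) is finite, and its cardinality equals the number of spanning trees of the cone graph G_r, i.e. the number of subgraphs of G_r that are trees containing every vertex of G_r. (Equivalently, the standard monomials of T_G are equinumerous with the rooted spanning forests of G.) -/
open MvPolynomial

/-- `dout_σ(i)`: the number of neighbors of `i` outside of `σ`. -/
noncomputable def doutDeg {n : ℕ} (G : SimpleGraph (Fin n)) (σ : Finset (Fin n)) (i : Fin n) :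
    ℕ :=
  {j : Fin n | j ∉ σ ∧ G.Adj i j}.ncard

/-- The tree ideal of `G`, generated by the monomials `∏_{i∈σ} x_i ^ (dout_σ(i)+1)`
over nonempty `σ ⊆ [n]` with `G[σ]` connected. -/
noncomputable def treeIdeal (n : ℕ) (G : SimpleGraph (Fin n)) (K : Type*) [Field K] :
    Ideal (MvPolynomial (Fin n) K) :=
  Ideal.span {f | ∃ σ : Finset (Fin n), σ.Nonempty ∧
    (G.induce (↑σ : Set (Fin n))).Connected ∧
    f = ∏ i ∈ σ, (X i : MvPolynomial (Fin n) K) ^ (doutDeg G σ i + 1)}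

/-- The cone graph `G_r` of `G`: a new vertex `r` (encoded as `none`) is joined to all
vertices of `G` (encoded as `some i`), keeping all edges of `G`. -/
def coneGraph {n : ℕ} (G : SimpleGraph (Fin n)) : SimpleGraph (Option (Fin n)) :=
  SimpleGraph.fromRel (fun u v => u = none ∨ ∃ i j, u = some i ∧ v = some j ∧ G.Adj i j)

/-!
A monomial `x^a` lies outside `T_G` iff `a` is a `G`-parking function: restricting to connected
`σ` loses nothing, because the part of `σ` reachable from one of its vertices inside `G[σ]` is
connected and has the same outdegrees. Extending `a` by `0` at the apex, `G`-parking functions are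
exactly the superstable configurations of the cone `G_r` with sink `r`.

Dhar's burning algorithm turns a superstable configuration `b` into a spanning tree of `G_r`:
starting from `r`, vertices catch fire one at a time, `i` as soon as more than `b i` of its
neighbours burn, and `i` is attached to its `(b i + 1)`-st burnt neighbour. Conversely, a spanning
tree read as a parent map towards `r` is burnt from the root outwards, and `b i` counts the
neighbours of `i` burnt before its parent. With the same tie-breaking both burnings produce the
same order, so the two constructions are mutually inverse.

A parent map whose rank decreases towards `r` spans a connected graph with `|V| - 1` edges, hence a
tree; every spanning tree arises this way from a choice of neighbour closer to `r`.
-/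

open Finset

section CountBelow

variable {V : Type*} {S : Finset V} {τ : V → ℕ}

lemma card_filter_lt_lt_card_filter_le_iff {j : V} (hj : j ∈ S) (t : ℕ) :
    #{k ∈ S | τ k < τ j} < #{k ∈ S | τ k ≤ t} ↔ τ j ≤ t := by
  constructor
  · intro h
    by_contra! ht
    refine h.not_ge (card_le_card fun k hk => ?_)
    simp only [mem_filter] at hk ⊢
    exact ⟨hk.1, by omega⟩
  · intro h
    refine card_lt_card ⟨fun k hk => ?_, fun hsub => ?_⟩
    · simp only [mem_filter] at hk ⊢
      exact ⟨hk.1, by omega⟩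
    · simpa using hsub (mem_filter.2 ⟨hj, h⟩)

lemma card_filter_lt_lt_of_lt {j j' : V} (hj : j ∈ S) (h : τ j < τ j') :
    #{k ∈ S | τ k < τ j} < #{k ∈ S | τ k < τ j'} :=
  ((card_filter_lt_lt_card_filter_le_iff hj (τ j)).2 le_rfl).trans_le
    (card_le_card fun k hk => by simp only [mem_filter] at hk ⊢; exact ⟨hk.1, by omega⟩)

lemma existsUnique_card_filter_lt_eq (hτ : Set.InjOn τ S) {m : ℕ} (hm : m < #S) :
    ∃! j, j ∈ S ∧ #{k ∈ S | τ k < τ j} = m := by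
  have inj : ∀ j ∈ S, ∀ j' ∈ S, #{k ∈ S | τ k < τ j} = #{k ∈ S | τ k < τ j'} → j = j' := by
    intro j hj j' hj' h
    by_contra hne
    rcases lt_or_gt_of_ne (hτ.ne hj hj' hne) with hlt | hlt
    · exact (card_filter_lt_lt_of_lt hj hlt).ne h
    · exact (card_filter_lt_lt_of_lt hj' hlt).ne' h
  obtain ⟨j, hj, hjm⟩ := surj_on_of_inj_on_of_card_le (fun j _ => #{k ∈ S | τ k < τ j})
    (fun j hj => mem_range.2 (card_lt_card (filter_ssubset.2 ⟨j, hj, lt_irrefl _⟩)))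
    (fun j j' hj hj' => inj j hj j' hj') (by simp) m (mem_range.2 hm)
  exact ⟨j, ⟨hj, hjm.symm⟩, fun j' hj' => inj j' hj'.1 j hj (hj'.2.trans hjm)⟩

end CountBelow

section Burning

variable {V : Type*} [DecidableEq V]

open Classical in
/-- Ties are broken by `Classical.choose`, which only depends on the set of allowed vertices:
two rules that agree along a burning sequence therefore produce the same sequence
(`burnTime_congr`). -/
noncomputable def burnStep (ok : V → Finset V → Prop) (B : Finset V) : Finset V :=
  if h : ∃ i, i ∉ B ∧ ok i B then insert h.choose B else B

noncomputable def burnSeq (ok : V → Finset V → Prop) (r : V) (t : ℕ) : Finset V :=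
  (burnStep ok)^[t] {r}

noncomputable def burnTime (ok : V → Finset V → Prop) (r : V) (v : V) : ℕ :=
  sInf {t | v ∈ burnSeq ok r t}

variable {ok : V → Finset V → Prop} {r : V}

lemma burnSeq_succ (t : ℕ) : burnSeq ok r (t + 1) = burnStep ok (burnSeq ok r t) :=
  Function.iterate_succ_apply' _ _ _

lemma subset_burnStep (B : Finset V) : B ⊆ burnStep ok B := by
  unfold burnStep
  split_ifs
  exacts [subset_insert _ _, subset_rfl]

lemma burnSeq_mono : Monotone (burnSeq ok r) :=
  monotone_nat_of_le_succ fun t => by rw [burnSeq_succ]; exact subset_burnStep _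

lemma root_mem_burnSeq (t : ℕ) : r ∈ burnSeq ok r t :=
  burnSeq_mono t.zero_le (mem_singleton_self r : r ∈ ({r} : Finset V))

lemma burnSeq_succ_eq_insert {t : ℕ} {v : V} (hv : v ∈ burnSeq ok r (t + 1))
    (hv' : v ∉ burnSeq ok r t) :
    ok v (burnSeq ok r t) ∧ burnSeq ok r (t + 1) = insert v (burnSeq ok r t) := by
  rw [burnSeq_succ] at hv ⊢
  unfold burnStep at hv ⊢
  split_ifs at hv ⊢ with h
  · obtain rfl := (mem_insert.1 hv).resolve_right hv'
    exact ⟨h.choose_spec.2, rfl⟩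
  · exact absurd hv hv'

lemma burnTime_congr {ok' : V → Finset V → Prop}
    (h : ∀ t, ∀ i ∉ burnSeq ok r t, ok' i (burnSeq ok r t) ↔ ok i (burnSeq ok r t)) :
    burnTime ok' r = burnTime ok r := by
  have hseq : burnSeq ok' r = burnSeq ok r := by
    funext t
    induction t with
    | zero => rfl
    | succ t ih =>
      rw [burnSeq_succ, burnSeq_succ, ih]
      have hallowed : (fun i => i ∉ burnSeq ok r t ∧ ok' i (burnSeq ok r t)) =
          fun i => i ∉ burnSeq ok r t ∧ ok i (burnSeq ok r t) :=
        funext fun i => propext (and_congr_right (h t i))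
      unfold burnStep
      rw [hallowed]
  funext v
  simp only [burnTime, hseq]

variable [Fintype V]

variable (ok r) in
def NeverStuck : Prop :=
  ∀ B : Finset V, r ∈ B → Bᶜ.Nonempty → ∃ i, i ∉ B ∧ ok i B

lemma exists_mem_burnSeq (hs : NeverStuck ok r) (v : V) : ∃ t, v ∈ burnSeq ok r t := by
  by_contra! h
  have hcard (t : ℕ) : #(burnSeq ok r t) = t + 1 := by
    induction t with
    | zero => exact card_singleton r
    | succ t ih =>
      have hex := hs _ (root_mem_burnSeq t) ⟨v, mem_compl.2 (h t)⟩
      rw [burnSeq_succ, burnStep, dif_pos hex, card_insert_of_notMem hex.choose_spec.1, ih]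
  have := card_le_univ (burnSeq ok r (Fintype.card V))
  rw [hcard] at this
  omega

lemma mem_burnSeq_iff (hs : NeverStuck ok r) {v : V} {t : ℕ} :
    v ∈ burnSeq ok r t ↔ burnTime ok r v ≤ t :=
  ⟨fun h => Nat.sInf_le h, fun h => burnSeq_mono h (Nat.sInf_mem (exists_mem_burnSeq hs v))⟩

lemma burnTime_eq_zero_iff (hs : NeverStuck ok r) {v : V} : burnTime ok r v = 0 ↔ v = r := by
  rw [← Nat.le_zero, ← mem_burnSeq_iff hs]
  exact mem_singleton

lemma burnTime_spec (hs : NeverStuck ok r) {v : V} (hv : v ≠ r) :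
    v ∉ burnSeq ok r (burnTime ok r v - 1) ∧ ok v (burnSeq ok r (burnTime ok r v - 1)) ∧
      burnSeq ok r (burnTime ok r v - 1 + 1) = insert v (burnSeq ok r (burnTime ok r v - 1)) := by
  have h0 : burnTime ok r v ≠ 0 := (burnTime_eq_zero_iff hs).not.2 hv
  have hnot : v ∉ burnSeq ok r (burnTime ok r v - 1) := by
    rw [mem_burnSeq_iff hs]
    omega
  exact ⟨hnot, burnSeq_succ_eq_insert ((mem_burnSeq_iff hs).2 (by omega)) hnot⟩

lemma burnTime_injective (hs : NeverStuck ok r) : Function.Injective (burnTime ok r) := by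
  intro v w h
  by_cases hv : v = r
  · rw [hv, eq_comm, ← burnTime_eq_zero_iff hs, ← h, burnTime_eq_zero_iff hs, hv]
  have hw : w ≠ r := fun hw => hv ((burnTime_eq_zero_iff hs).1 (h ▸ (burnTime_eq_zero_iff hs).2 hw))
  obtain ⟨hv', -, hvins⟩ := burnTime_spec hs hv
  obtain ⟨-, -, hwins⟩ := burnTime_spec hs hw
  rw [← h] at hwins
  exact (insert_inj hv').1 (hvins.symm.trans hwins)

lemma burnTime_lt_of_ok_imp_mem (hs : NeverStuck ok r) {i j : V} (hi : i ≠ r)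
    (h : ∀ t, ok i (burnSeq ok r t) → j ∈ burnSeq ok r t) : burnTime ok r j < burnTime ok r i := by
  have hj := (mem_burnSeq_iff hs).1 (h _ (burnTime_spec hs hi).2.1)
  have := (burnTime_eq_zero_iff hs).not.2 hi
  omega

end Burning

section ParentMap

variable {V : Type*}

structure IsParentMap (H : SimpleGraph V) (r : V) (p : V → V) : Prop where
  map_root : p r = r
  adj : ∀ v, v ≠ r → H.Adj v (p v)
  exists_rank : ∃ rank : V → ℕ, ∀ v, v ≠ r → rank (p v) < rank v

lemma IsParentMap.mono {H H' : SimpleGraph V} {r : V} {p : V → V} (hp : IsParentMap H r p)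
    (h : H ≤ H') : IsParentMap H' r p :=
  ⟨hp.map_root, fun v hv => h (hp.adj v hv), hp.exists_rank⟩

end ParentMap

section Dhar

variable {V : Type*} [Fintype V] [DecidableEq V] {H : SimpleGraph V} {r : V}

def parentRule (p : V → V) (i : V) (B : Finset V) : Prop := p i ∈ B

lemma IsParentMap.neverStuck {p : V → V} (hp : IsParentMap H r p) :
    NeverStuck (parentRule p) r := by
  intro B hr hB
  obtain ⟨rank, hrank⟩ := hp.exists_rank
  obtain ⟨v, hv, hmin⟩ := exists_min_image Bᶜ rank hB
  have hvr : v ≠ r := by rintro rfl; exact mem_compl.1 hv hr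
  refine ⟨v, mem_compl.1 hv, ?_⟩
  by_contra h
  exact (hmin _ (mem_compl.2 h)).not_gt (hrank v hvr)

variable [DecidableRel H.Adj]

variable (H r) in
def IsSuperstable (b : V → ℕ) : Prop :=
  b r = 0 ∧ ∀ σ : Finset V, σ.Nonempty → r ∉ σ → ∃ i ∈ σ, b i < #(H.neighborFinset i \ σ)

variable (H) in
def dharRule (b : V → ℕ) (i : V) (B : Finset V) : Prop := b i < #(H.neighborFinset i ∩ B)

lemma IsSuperstable.neverStuck {b : V → ℕ} (hb : IsSuperstable H r b) :
    NeverStuck (dharRule H b) r := by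
  intro B hr hB
  obtain ⟨i, hi, hlt⟩ := hb.2 Bᶜ hB (by simpa)
  exact ⟨i, mem_compl.1 hi, by rwa [sdiff_compl] at hlt⟩

lemma dharRule_iff_parentRule {b : V → ℕ} {p : V → V} {τ : V → ℕ} {B : Finset V} {t : ℕ}
    (hB : ∀ k, k ∈ B ↔ τ k ≤ t) {i : V} (hadj : H.Adj i (p i))
    (hcount : #{k ∈ H.neighborFinset i | τ k < τ (p i)} = b i) :
    dharRule H b i B ↔ parentRule p i B := by
  have hinter : H.neighborFinset i ∩ B = {k ∈ H.neighborFinset i | τ k ≤ t} := by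
    ext k
    simp [hB]
  rw [dharRule, parentRule, hinter, ← hcount, hB]
  exact card_filter_lt_lt_card_filter_le_iff ((H.mem_neighborFinset i _).2 hadj) t

variable (H r) in
open Classical in
noncomputable def dharParent (b : V → ℕ) (i : V) : V :=
  if h : i ≠ r ∧ ∃ j ∈ H.neighborFinset i,
      #{k ∈ H.neighborFinset i | burnTime (dharRule H b) r k < burnTime (dharRule H b) r j} = b i
  then h.2.choose else r

variable (H r) in
noncomputable def parentConfig (p : V → V) (i : V) : ℕ :=
  if i = r then 0 else
    #{k ∈ H.neighborFinset i | burnTime (parentRule p) r k < burnTime (parentRule p) r (p i)}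

lemma IsSuperstable.lt_card_neighborFinset {b : V → ℕ} (hb : IsSuperstable H r b) {i : V}
    (hi : i ≠ r) : b i < #(H.neighborFinset i) :=
  (burnTime_spec hb.neverStuck hi).2.1.trans_le (card_le_card inter_subset_left)

lemma IsSuperstable.existsUnique_parent {b : V → ℕ} (hb : IsSuperstable H r b) {i : V}
    (hi : i ≠ r) :
    ∃! j, j ∈ H.neighborFinset i ∧
      #{k ∈ H.neighborFinset i | burnTime (dharRule H b) r k < burnTime (dharRule H b) r j} =
        b i :=
  existsUnique_card_filter_lt_eq (burnTime_injective hb.neverStuck).injOn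
    (hb.lt_card_neighborFinset hi)

lemma IsSuperstable.dharParent_spec {b : V → ℕ} (hb : IsSuperstable H r b) {i : V}
    (hi : i ≠ r) :
    H.Adj i (dharParent H r b i) ∧
      #{k ∈ H.neighborFinset i | burnTime (dharRule H b) r k <
        burnTime (dharRule H b) r (dharParent H r b i)} = b i := by
  have h : i ≠ r ∧ _ := ⟨hi, (hb.existsUnique_parent hi).exists⟩
  rw [dharParent, dif_pos h]
  exact ⟨(H.mem_neighborFinset i _).1 h.2.choose_spec.1, h.2.choose_spec.2⟩

lemma IsSuperstable.isParentMap_dharParent {b : V → ℕ} (hb : IsSuperstable H r b) :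
    IsParentMap H r (dharParent H r b) := by
  refine ⟨dif_neg fun h => h.1 rfl, fun i hi => (hb.dharParent_spec hi).1,
    burnTime (dharRule H b) r, fun i hi => ?_⟩
  refine burnTime_lt_of_ok_imp_mem hb.neverStuck hi fun t => ?_
  exact (dharRule_iff_parentRule (fun k => mem_burnSeq_iff hb.neverStuck)
    (hb.dharParent_spec hi).1 (hb.dharParent_spec hi).2).1

lemma IsParentMap.isSuperstable_parentConfig {p : V → V} (hp : IsParentMap H r p) :
    IsSuperstable H r (parentConfig H r p) := by
  refine ⟨if_pos rfl, fun σ hσ hr => ?_⟩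
  set τ := burnTime (parentRule p) r
  obtain ⟨i, hi, hmin⟩ := exists_min_image σ τ hσ
  have hir : i ≠ r := by rintro rfl; exact hr hi
  have hpi : τ (p i) < τ i := burnTime_lt_of_ok_imp_mem hp.neverStuck hir fun _ h => h
  have hsub : insert (p i) {k ∈ H.neighborFinset i | τ k < τ (p i)} ⊆
      H.neighborFinset i \ σ := by
    refine insert_subset ?_ fun k hk => ?_
    · exact mem_sdiff.2 ⟨(H.mem_neighborFinset i _).2 (hp.adj i hir),
        fun h => (hmin _ h).not_gt hpi⟩
    · rw [mem_filter] at hk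
      exact mem_sdiff.2 ⟨hk.1, fun h => (hmin _ h).not_gt (hk.2.trans hpi)⟩
  have hcard := card_le_card hsub
  rw [card_insert_of_notMem (by simp)] at hcard
  refine ⟨i, hi, ?_⟩
  rw [parentConfig, if_neg hir]
  exact Nat.lt_of_succ_le hcard

lemma IsSuperstable.burnTime_parentRule_dharParent {b : V → ℕ} (hb : IsSuperstable H r b) :
    burnTime (parentRule (dharParent H r b)) r = burnTime (dharRule H b) r := by
  refine burnTime_congr fun t i hi => ?_
  have hir : i ≠ r := by rintro rfl; exact hi (root_mem_burnSeq t)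
  exact (dharRule_iff_parentRule (fun k => mem_burnSeq_iff hb.neverStuck)
    (hb.dharParent_spec hir).1 (hb.dharParent_spec hir).2).symm

lemma IsParentMap.burnTime_dharRule_parentConfig {p : V → V} (hp : IsParentMap H r p) :
    burnTime (dharRule H (parentConfig H r p)) r = burnTime (parentRule p) r := by
  refine burnTime_congr fun t i hi => ?_
  have hir : i ≠ r := by rintro rfl; exact hi (root_mem_burnSeq t)
  exact dharRule_iff_parentRule (fun k => mem_burnSeq_iff hp.neverStuck) (hp.adj i hir)
    (if_neg hir).symm

lemma IsSuperstable.parentConfig_dharParent {b : V → ℕ} (hb : IsSuperstable H r b) :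
    parentConfig H r (dharParent H r b) = b := by
  funext i
  by_cases hir : i = r
  · rw [parentConfig, if_pos hir, hir, hb.1]
  · rw [parentConfig, if_neg hir, hb.burnTime_parentRule_dharParent]
    exact (hb.dharParent_spec hir).2

lemma IsParentMap.dharParent_parentConfig {p : V → V} (hp : IsParentMap H r p) :
    dharParent H r (parentConfig H r p) = p := by
  funext i
  by_cases hir : i = r
  · rw [dharParent, dif_neg fun h => h.1 hir, hir, hp.map_root]
  have hb := hp.isSuperstable_parentConfig
  refine (hb.existsUnique_parent hir).unique ⟨(H.mem_neighborFinset i _).2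
    (hb.dharParent_spec hir).1, (hb.dharParent_spec hir).2⟩ ⟨(H.mem_neighborFinset i _).2
    (hp.adj i hir), ?_⟩
  rw [hp.burnTime_dharRule_parentConfig, parentConfig, if_neg hir]

variable (H r) in
noncomputable def superstableEquivParentMap :
    {b : V → ℕ // IsSuperstable H r b} ≃ {p : V → V // IsParentMap H r p} where
  toFun b := ⟨dharParent H r b, b.2.isParentMap_dharParent⟩
  invFun p := ⟨parentConfig H r p, p.2.isSuperstable_parentConfig⟩
  left_inv b := Subtype.ext b.2.parentConfig_dharParent
  right_inv p := Subtype.ext p.2.dharParent_parentConfig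

end Dhar

lemma Nat.card_subtype_ne_add_one {V : Type*} [Finite V] (r : V) :
    Nat.card {v // v ≠ r} + 1 = Nat.card V := by
  have := Fintype.ofFinite V
  classical
  rw [Nat.card_eq_fintype_card, Nat.card_eq_fintype_card, Fintype.card_subtype_compl,
    Fintype.card_subtype_eq]
  have := Fintype.card_pos_iff.2 ⟨r⟩
  omega

section SpanningTree

open SimpleGraph

variable {V : Type*} {H T : SimpleGraph V} {r : V} {p : V → V}

def parentGraph (p : V → V) : SimpleGraph V := SimpleGraph.fromRel fun u v => p u = v

namespace IsParentMap

lemma map_ne (hp : IsParentMap H r p) {v : V} (hv : v ≠ r) : p v ≠ v :=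
  (hp.adj v hv).ne'

lemma parentGraph_le (hp : IsParentMap H r p) : parentGraph p ≤ H := by
  have hroot : ∀ {u}, u ≠ p u → u ≠ r := fun hne h => hne (h ▸ hp.map_root.symm)
  rintro u v ⟨hne, rfl | rfl⟩
  · exact hp.adj u (hroot hne)
  · exact (hp.adj v (hroot hne.symm)).symm

lemma reachable_root (hp : IsParentMap H r p) (v : V) : (parentGraph p).Reachable v r := by
  obtain ⟨rank, hrank⟩ := hp.exists_rank
  induction hn : rank v using Nat.strong_induction_on generalizing v with
  | _ n ih =>
    by_cases hv : v = r
    · exact hv ▸ Reachable.refl v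
    · exact (Adj.reachable (G := parentGraph p) ⟨(hp.map_ne hv).symm, Or.inl rfl⟩).trans
        (ih _ (hn ▸ hrank v hv) _ rfl)

lemma connected (hp : IsParentMap H r p) : (parentGraph p).Connected :=
  haveI : Nonempty V := ⟨r⟩
  ⟨fun u v => (hp.reachable_root u).trans (hp.reachable_root v).symm⟩

/-- Each non-root vertex owns the edge to its parent; no edge is owned twice since
`p (p v) = v` would make the rank decrease around a 2-cycle. -/
lemma card_edgeSet (hp : IsParentMap H r p) :
    Nat.card (parentGraph p).edgeSet = Nat.card {v // v ≠ r} := by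
  obtain ⟨rank, hrank⟩ := hp.exists_rank
  let e : {v // v ≠ r} → (parentGraph p).edgeSet :=
    fun v => ⟨s(v.1, p v.1), (mem_edgeSet _).2 ⟨(hp.map_ne v.2).symm, Or.inl rfl⟩⟩
  refine (Nat.card_congr (Equiv.ofBijective e ⟨fun v w hvw => ?_, ?_⟩)).symm
  · rcases Sym2.eq_iff.1 (congrArg Subtype.val hvw) with ⟨h, -⟩ | ⟨h₁, h₂⟩
    · exact Subtype.ext h
    · have hv := hrank v.1 v.2
      have hw := hrank w.1 w.2
      rw [h₂] at hv
      rw [← h₁] at hw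
      omega
  · rintro ⟨e, he⟩
    induction e using Sym2.ind with
    | _ u v =>
      obtain ⟨hne, rfl | rfl⟩ := (mem_edgeSet _).1 he
      · exact ⟨⟨u, fun h => hne (h ▸ hp.map_root.symm)⟩, rfl⟩
      · exact ⟨⟨v, fun h => hne (h ▸ hp.map_root)⟩, Subtype.ext Sym2.eq_swap⟩

lemma isTree [Finite V] (hp : IsParentMap H r p) : (parentGraph p).IsTree := by
  rw [isTree_iff_connected_and_card, hp.card_edgeSet]
  exact ⟨hp.connected, Nat.card_subtype_ne_add_one r⟩

/-- By induction on the rank of `v`: if `q v ≠ p v`, the edge `v — p v` forces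
`q (p v) = v = p (p v)`, a 2-cycle. -/
lemma eq_of_parentGraph_eq (hp : IsParentMap H r p) {q : V → V} (hq : q r = r)
    (h : parentGraph p = parentGraph q) : p = q := by
  obtain ⟨rank, hrank⟩ := hp.exists_rank
  funext v
  induction hn : rank v using Nat.strong_induction_on generalizing v with
  | _ n ih =>
    by_cases hv : v = r
    · rw [hv, hp.map_root, hq]
    have hadj : (parentGraph q).Adj v (p v) := h ▸ ⟨(hp.map_ne hv).symm, Or.inl rfl⟩
    rcases hadj.2 with hqv | hqpv
    · exact hqv.symm
    have hpv : p v ≠ r := fun h' => hv (by rw [← hqpv, h', hq])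
    have hppv : p (p v) = v := (ih _ (hn ▸ hrank v hv) (p v) rfl).trans hqpv
    have hlt := hrank _ hpv
    rw [hppv] at hlt
    exact absurd (hrank v hv) (by omega)

end IsParentMap

lemma SimpleGraph.IsTree.eq_of_le [Finite V] {T T' : SimpleGraph V} (hT : T.IsTree)
    (hT' : T'.IsTree) (h : T ≤ T') : T = T' := by
  have hcard := (isTree_iff_connected_and_card.1 hT).2
  have hcard' := (isTree_iff_connected_and_card.1 hT').2
  rw [← edgeSet_inj]
  refine Set.eq_of_subset_of_ncard_le (edgeSet_subset_edgeSet.2 h) ?_ (Set.toFinite _)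
  rw [← Nat.card_coe_set_eq, ← Nat.card_coe_set_eq]
  omega

open Classical in
noncomputable def treeParent (T : SimpleGraph V) (r : V) (v : V) : V :=
  if h : ∃ w, T.Adj v w ∧ T.dist w r < T.dist v r then h.choose else r

lemma SimpleGraph.Connected.exists_adj_dist_lt (hT : T.Connected) {v : V} (hv : v ≠ r) :
    ∃ w, T.Adj v w ∧ T.dist w r < T.dist v r := by
  obtain ⟨W, hW⟩ := hT.exists_walk_length_eq_dist v r
  cases W with
  | nil => exact absurd rfl hv
  | cons h W' =>
    refine ⟨_, h, (dist_le W').trans_lt ?_⟩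
    rw [← hW, Walk.length_cons]
    exact Nat.lt_succ_self _

lemma SimpleGraph.Connected.isParentMap_treeParent (hT : T.Connected) :
    IsParentMap T r (treeParent T r) := by
  have hspec : ∀ v, v ≠ r →
      T.Adj v (treeParent T r v) ∧ T.dist (treeParent T r v) r < T.dist v r := fun v hv => by
    rw [treeParent, dif_pos (hT.exists_adj_dist_lt hv)]
    exact (hT.exists_adj_dist_lt hv).choose_spec
  refine ⟨dif_neg ?_, fun v hv => (hspec v hv).1, (T.dist · r), fun v hv => (hspec v hv).2⟩
  rintro ⟨w, -, hw⟩
  simp at hw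

variable (H r) in
noncomputable def parentMapEquivSpanningTree [Finite V] :
    {p : V → V // IsParentMap H r p} ≃ {T : SimpleGraph V // T ≤ H ∧ T.IsTree} :=
  Equiv.ofBijective (fun p => ⟨parentGraph p.1, p.2.parentGraph_le, p.2.isTree⟩)
    ⟨fun p q h => Subtype.ext (p.2.eq_of_parentGraph_eq q.2.map_root (congrArg Subtype.val h)),
      fun T => by
        have hp := T.2.2.connected.isParentMap_treeParent (r := r)
        exact ⟨⟨_, hp.mono T.2.1⟩, Subtype.ext (hp.isTree.eq_of_le T.2.2 hp.parentGraph_le)⟩⟩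

end SpanningTree

section MonomialIdeal

open MvPolynomial

variable {σ R : Type*} [Fintype σ] [CommSemiring R]

lemma prod_X_pow_eq_monomial_equivFunOnFinite (e : σ → ℕ) :
    ∏ i, (X i : MvPolynomial σ R) ^ e i = monomial (Finsupp.equivFunOnFinite.symm e) 1 := by
  rw [monomial_eq, C_1, one_mul, Finsupp.prod_fintype _ _ fun _ => pow_zero _]
  rfl

lemma prod_X_pow_mem_span_prod_X_pow_iff [Nontrivial R] (S : Set (σ → ℕ)) (a : σ → ℕ) :
    ∏ i, (X i : MvPolynomial σ R) ^ a i ∈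
        Ideal.span ((fun e => ∏ i, (X i : MvPolynomial σ R) ^ e i) '' S) ↔ ∃ e ∈ S, e ≤ a := by
  classical
  simp_rw [prod_X_pow_eq_monomial_equivFunOnFinite]
  rw [← Set.image_image (fun s => monomial s (1 : R)), mem_ideal_span_monomial_image,
    support_monomial, if_neg one_ne_zero]
  simp only [Finset.mem_singleton, forall_eq, Set.exists_mem_image, Finsupp.le_def,
    Finsupp.equivFunOnFinite_symm_apply_apply, Pi.le_def]

end MonomialIdeal

section TreeIdeal

open MvPolynomial SimpleGraph

variable {n : ℕ} {G : SimpleGraph (Fin n)}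

lemma doutDeg_eq_card_sdiff [DecidableRel G.Adj] (σ : Finset (Fin n)) (i : Fin n) :
    doutDeg G σ i = #(G.neighborFinset i \ σ) := by
  rw [doutDeg, ← Set.ncard_coe_finset]
  congr 1
  ext j
  simp [and_comm]

variable (G) in
def IsParkingFunction (a : Fin n → ℕ) : Prop :=
  ∀ σ : Finset (Fin n), σ.Nonempty → ∃ i ∈ σ, a i ≤ doutDeg G σ i

lemma exists_connected_subset_doutDeg_eq {σ : Finset (Fin n)} (hσ : σ.Nonempty) :
    ∃ τ ⊆ σ, τ.Nonempty ∧ (G.induce (τ : Set (Fin n))).Connected ∧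
      ∀ i ∈ τ, doutDeg G τ i = doutDeg G σ i := by
  classical
  obtain ⟨v, hv⟩ := hσ
  let τ : Finset (Fin n) := {u | ∃ W : G.Walk v u, ∀ x ∈ W.support, x ∈ σ}
  have mem_τ {u : Fin n} : u ∈ τ ↔ ∃ W : G.Walk v u, ∀ x ∈ W.support, x ∈ σ := by simp [τ]
  have hsub : τ ⊆ σ := fun u hu => by
    obtain ⟨W, hW⟩ := mem_τ.1 hu
    exact hW u W.end_mem_support
  have hclosed : ∀ i ∈ τ, ∀ j ∈ σ, G.Adj i j → j ∈ τ := by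
    intro i hi j hj hadj
    obtain ⟨W, hW⟩ := mem_τ.1 hi
    refine mem_τ.2 ⟨W.concat hadj, fun x hx => ?_⟩
    rw [Walk.support_concat, List.mem_append, List.mem_singleton] at hx
    exact hx.elim (hW x) (· ▸ hj)
  have hvτ : v ∈ τ := mem_τ.2 ⟨Walk.nil, by simpa⟩
  refine ⟨τ, hsub, ⟨v, hvτ⟩, ?_, fun i hi => ?_⟩
  · refine induce_connected_of_patches v (mem_coe.2 hvτ) fun {u} hu => ?_
    obtain ⟨W, hW⟩ := mem_τ.1 (by simpa using hu)
    refine ⟨{x | x ∈ W.support}, fun x hx => ?_, W.start_mem_support, W.end_mem_support,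
      W.connected_induce_support.preconnected _ _⟩
    exact mem_coe.2 (mem_τ.2 ⟨W.takeUntil x hx,
      fun y hy => hW y (W.support_takeUntil_subset_support hx hy)⟩)
  · unfold doutDeg
    congr 1
    ext j
    exact ⟨fun ⟨hj, hadj⟩ => ⟨fun hjσ => hj (hclosed i hi j hjσ hadj), hadj⟩,
      fun ⟨hj, hadj⟩ => ⟨fun hjτ => hj (hsub hjτ), hadj⟩⟩

lemma isParkingFunction_of_connected {a : Fin n → ℕ}
    (h : ∀ σ : Finset (Fin n), σ.Nonempty → (G.induce (σ : Set (Fin n))).Connected →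
      ∃ i ∈ σ, a i ≤ doutDeg G σ i) : IsParkingFunction G a := by
  intro σ hσ
  obtain ⟨τ, hτσ, hτ, hconn, hdout⟩ := exists_connected_subset_doutDeg_eq (G := G) hσ
  obtain ⟨i, hi, hle⟩ := h τ hτ hconn
  exact ⟨i, hτσ hi, hdout i hi ▸ hle⟩

variable (G) in
lemma prod_X_pow_notMem_treeIdeal_iff (K : Type*) [Field K] (a : Fin n → ℕ) :
    ∏ i, (X i : MvPolynomial (Fin n) K) ^ a i ∉ treeIdeal n G K ↔ IsParkingFunction G a := by
  classical
  have hspan : treeIdeal n G K = Ideal.span ((fun e => ∏ i, (X i : MvPolynomial (Fin n) K) ^ e i) ''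
      {e | ∃ σ : Finset (Fin n), σ.Nonempty ∧ (G.induce (σ : Set (Fin n))).Connected ∧
        e = fun i => if i ∈ σ then doutDeg G σ i + 1 else 0}) := by
    rw [treeIdeal]
    congr 1
    ext f
    simp [pow_ite, eq_comm, and_assoc]
  rw [hspan, prod_X_pow_mem_span_prod_X_pow_iff]
  constructor
  · refine fun h => isParkingFunction_of_connected fun σ hσ hconn => ?_
    by_contra! hlt
    refine h ⟨_, ⟨σ, hσ, hconn, rfl⟩, fun i => ?_⟩
    split_ifs with hi
    exacts [hlt i hi, Nat.zero_le _]
  · rintro h ⟨_, ⟨σ, hσ, -, rfl⟩, hle⟩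
    obtain ⟨i, hi, hai⟩ := h σ hσ
    have := hle i
    simp only [hi, if_true] at this
    omega

end TreeIdeal

section Cone

variable {n : ℕ} {G : SimpleGraph (Fin n)}

@[simp]
lemma coneGraph_adj_some_some {i j : Fin n} : (coneGraph G).Adj (some i) (some j) ↔ G.Adj i j := by
  simp only [coneGraph, exists_and_left, SimpleGraph.fromRel_adj, ne_eq, Option.some.injEq,
    reduceCtorEq, exists_eq_left', false_or, G.adj_comm j i, or_self, and_iff_right_iff_imp]
  exact SimpleGraph.Adj.ne

@[simp]
lemma coneGraph_adj_some_none (i : Fin n) : (coneGraph G).Adj (some i) none := by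
  simp [coneGraph]

lemma neighborFinset_coneGraph_sdiff [DecidableRel G.Adj] [DecidableRel (coneGraph G).Adj]
    (σ : Finset (Fin n)) (i : Fin n) :
    (coneGraph G).neighborFinset (some i) \ σ.map .some = (G.neighborFinset i \ σ).insertNone := by
  ext (_ | j) <;> simp

lemma isSuperstable_coneGraph_iff [DecidableRel G.Adj] [DecidableRel (coneGraph G).Adj]
    (b : Option (Fin n) → ℕ) :
    IsSuperstable (coneGraph G) none b ↔ b none = 0 ∧ IsParkingFunction G (b ∘ some) := by
  have hcard (σ : Finset (Fin n)) (i : Fin n) :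
      #((coneGraph G).neighborFinset (some i) \ σ.map .some) = doutDeg G σ i + 1 := by
    rw [neighborFinset_coneGraph_sdiff, card_insertNone, doutDeg_eq_card_sdiff]
  refine and_congr_right fun _ => ⟨fun h σ hσ => ?_, fun h σ hσ hnone => ?_⟩
  · obtain ⟨o, ho, hlt⟩ := h (σ.map .some) (hσ.map) (by simp)
    obtain ⟨i, hi, rfl⟩ := mem_map.1 ho
    rw [Function.Embedding.some_apply, hcard] at hlt
    exact ⟨i, hi, Nat.lt_succ_iff.1 hlt⟩
  · have hσ' : σ = σ.eraseNone.map .some := by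
      rw [map_some_eraseNone, erase_eq_of_notMem hnone]
    obtain ⟨i, hi, hle⟩ := h σ.eraseNone (by
      obtain ⟨_ | j, ho⟩ := hσ
      exacts [absurd ho hnone, ⟨j, mem_eraseNone.2 ho⟩])
    refine ⟨some i, mem_eraseNone.1 hi, ?_⟩
    rw [hσ', hcard]
    exact Nat.lt_succ_of_le hle

def parkingFunctionEquivSuperstable [DecidableRel G.Adj] [DecidableRel (coneGraph G).Adj] :
    {a : Fin n → ℕ // IsParkingFunction G a} ≃
      {b : Option (Fin n) → ℕ // IsSuperstable (coneGraph G) none b} where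
  toFun a := ⟨fun o => o.elim 0 a.1, (isSuperstable_coneGraph_iff _).2 ⟨rfl, a.2⟩⟩
  invFun b := ⟨b.1 ∘ some, ((isSuperstable_coneGraph_iff _).1 b.2).2⟩
  left_inv _ := rfl
  right_inv b := Subtype.ext (funext fun o => by cases o; exacts [b.2.1.symm, rfl])

end Cone

/-- the set of standard monomials of the tree ideal `T_G` is finite, and its
cardinality equals the number of spanning trees of the cone graph `G_r`. -/
theorem stmt8 (n : ℕ) (G : SimpleGraph (Fin n)) (K : Type*) [Field K] :
    {a : Fin n → ℕ |
        (∏ i, (X i : MvPolynomial (Fin n) K) ^ a i) ∉ treeIdeal n G K}.Finite ∧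
    {a : Fin n → ℕ |
        (∏ i, (X i : MvPolynomial (Fin n) K) ^ a i) ∉ treeIdeal n G K}.ncard =
      {T : SimpleGraph (Option (Fin n)) | T ≤ coneGraph G ∧ T.IsTree}.ncard := by
  classical
  let e : {a : Fin n → ℕ | (∏ i, (X i : MvPolynomial (Fin n) K) ^ a i) ∉ treeIdeal n G K} ≃
      {T : SimpleGraph (Option (Fin n)) | T ≤ coneGraph G ∧ T.IsTree} :=
    (Equiv.subtypeEquivRight fun a => prod_X_pow_notMem_treeIdeal_iff G K a).trans <|
      parkingFunctionEquivSuperstable.trans <|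
        (superstableEquivParentMap _ _).trans (parentMapEquivSpanningTree _ _)
  refine ⟨Set.finite_coe_iff.1 (Finite.of_equiv _ e.symm), ?_⟩
  rw [← Nat.card_coe_set_eq, ← Nat.card_coe_set_eq]
  exact Nat.card_congr e
end

section
/- Let G = ([n], E) be a finite simple graph, k a field, and a ∈ ℕ^n. Then x^a ∉ T_G and x^{a+e_i} ∈ T_G for every i ∈ [n] (i.e., x^a is a standard monomial of T_G maximal under divisibility) if and only if there exists an acyclic orientation O of G with a_i = outdeg_O(i) for all i ∈ [n]. Moreover, distinct acyclic orientations of G have distinct out-degree vectors, so such an O is unique. -/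
open MvPolynomial

/-- `O` is an orientation of `G`. -/
def IsOrientation {V : Type*} (G : SimpleGraph V) (O : V → V → Prop) : Prop :=
  (∀ u v, O u v → G.Adj u v) ∧ ∀ u v, G.Adj u v → (O u v ↔ ¬ O v u)

/-- The relation `O` has no directed cycles. -/
def IsAcyclicRel {V : Type*} (O : V → V → Prop) : Prop :=
  ∀ v, ¬ Relation.TransGen O v v

/-- Out-degree of a vertex with respect to an orientation. -/
noncomputable def outDeg {V : Type*} (O : V → V → Prop) (i : V) : ℕ :=
  {j : V | O i j}.ncard

/-!
If `O` is an acyclic orientation, every nonempty `σ` contains a sink of `O` restricted to `σ`,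
whose out-degree is at most `dout_σ`; so no generator of `T_G` divides `x^outdeg_O`. One more
factor `x_{i₀}` suffices: the vertices from which `i₀` can be reached form a connected `σ` whose
generator divides `x^(outdeg_O + e_{i₀})`.

Conversely, if `x^a ∉ T_G`, then every nonempty `S` (through a component of `G[S]`) has a vertex
`v` with `a_v ≤ dout_S(v)`. Peeling such vertices off one by one orders the vertices, and orienting
each edge towards the vertex removed first gives an acyclic orientation with `a ≤ outdeg`;
the sink argument applied to `x^(a + e_{i₀}) ∈ T_G` forces equality.

For uniqueness, on the edges where two acyclic orientations with the same out-degrees disagree,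
every vertex has as many outgoing as incoming such edges, which is impossible without a cycle.
-/

open Relation

section Orientation

variable {V : Type*} {G : SimpleGraph V} {O O' : V → V → Prop}

lemma IsOrientation.rel_swap_of_not_rel (hO : IsOrientation G O) {u v : V} (huv : G.Adj u v)
    (h : ¬ O u v) : O v u :=
  not_not.mp fun h' => h ((hO.2 u v huv).mpr h')

lemma IsOrientation.not_rel_swap (hO : IsOrientation G O) {u v : V} (h : O u v) : ¬ O v u :=
  (hO.2 u v (hO.1 u v h)).mp h

lemma IsAcyclicRel.exists_sink [Finite V] (hO : IsAcyclicRel O) {s : Set V} (hs : s.Nonempty) :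
    ∃ i ∈ s, ∀ j ∈ s, ¬ O i j := by
  have : IsTrans V (flip (TransGen O)) := ⟨fun _ _ _ h₁ h₂ => h₂.trans h₁⟩
  have : Std.Irrefl (flip (TransGen O)) := ⟨hO⟩
  obtain ⟨i, hi, hmin⟩ := (Finite.wellFounded_of_trans_of_irrefl (flip (TransGen O))).has_min s hs
  exact ⟨i, hi, fun j hj hij => hmin j hj (.single hij)⟩

def rankOrientation (G : SimpleGraph V) (r : V → ℕ) (i j : V) : Prop :=
  G.Adj i j ∧ r j < r i

lemma isOrientation_rankOrientation {r : V → ℕ} (hr : Function.Injective r) :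
    IsOrientation G (rankOrientation G r) := by
  refine ⟨fun _ _ h => h.1, fun u v huv => ?_⟩
  have : r u ≠ r v := hr.ne huv.ne
  simp only [rankOrientation, huv, huv.symm, true_and, not_lt]
  omega

lemma isAcyclicRel_rankOrientation (r : V → ℕ) : IsAcyclicRel (rankOrientation G r) := by
  have lt_of_transGen {x y : V} (h : TransGen (rankOrientation G r) x y) : r y < r x := by
    induction h with
    | single h => exact h.2
    | tail _ h ih => exact h.2.trans ih
  exact fun v h => (lt_of_transGen h).false

lemma outDeg_eq_ncard_add_ncard [Finite V] (hO : IsOrientation G O) (hO' : IsOrientation G O')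
    (i : V) : outDeg O i = {j | O i j ∧ O' i j}.ncard + {j | O i j ∧ O' j i}.ncard := by
  rw [outDeg, ← Set.ncard_union_eq]
  · congr 1
    ext j
    refine ⟨fun h => ?_, fun h => h.elim And.left And.left⟩
    by_cases h' : O' i j
    · exact .inl ⟨h, h'⟩
    · exact .inr ⟨h, hO'.rel_swap_of_not_rel (hO.1 i j h) h'⟩
  · exact Set.disjoint_left.mpr fun j h h' => hO'.not_rel_swap h.2 h'.2

theorem IsOrientation.eq_of_outDeg_eq [Finite V] (hO : IsOrientation G O)
    (hO' : IsOrientation G O') (hac : IsAcyclicRel O) (hdeg : ∀ i, outDeg O i = outDeg O' i) :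
    O = O' := by
  set D : V → V → Prop := fun x y => O x y ∧ O' y x
  have hbalance (i : V) : {j | D i j}.ncard = {j | D j i}.ncard := by
    have h := outDeg_eq_ncard_add_ncard hO hO' i
    rw [hdeg, outDeg_eq_ncard_add_ncard hO' hO i] at h
    simp only [D, and_comm (a := O' i _)] at h ⊢
    omega
  by_contra hne
  have hD : ∃ u v, D u v := by
    by_contra! hD
    refine hne (funext₂ fun u v => propext ?_)
    constructor
    · exact fun h => by_contra fun h' => hD u v ⟨h, hO'.rel_swap_of_not_rel (hO.1 u v h) h'⟩
    · exact fun h => by_contra fun h' => hD v u ⟨hO.rel_swap_of_not_rel (hO'.1 u v h) h', h⟩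
  obtain ⟨u, v, huv⟩ := hD
  -- a sink of `O` among the heads of `D`-edges would have to be the tail of one as well
  obtain ⟨i, ⟨y, hyi⟩, hsink⟩ := hac.exists_sink (s := {x | ∃ y, D y x}) ⟨v, u, huv⟩
  obtain ⟨z, hiz⟩ : {j | D i j}.Nonempty := by
    rw [← Set.ncard_pos, hbalance, Set.ncard_pos]
    exact ⟨y, hyi⟩
  exact hsink z ⟨i, hiz⟩ hiz.1

end Orientation

lemma SimpleGraph.connected_induce_insert {V : Type*} {G : SimpleGraph V} {s : Set V} {i j : V}
    (hs : (G.induce s).Connected) (hi : i ∈ s) (hij : G.Adj i j) :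
    (G.induce (insert j s)).Connected := by
  have hunion : s ∪ {i, j} = insert j s := by
    rw [Set.union_insert, Set.insert_eq_of_mem (.inl hi), Set.union_singleton]
  rw [← hunion]
  exact G.induce_union_connected hs.preconnected (G.induce_pair_connected_of_adj hij).preconnected
    ⟨i, hi, by simp⟩

section TreeIdeal

variable {n : ℕ} {G : SimpleGraph (Fin n)} {O : Fin n → Fin n → Prop}

lemma prod_X_pow_mem_treeIdeal_iff (K : Type*) [Field K] (b : Fin n → ℕ) :
    ∏ i, (X i : MvPolynomial (Fin n) K) ^ b i ∈ treeIdeal n G K ↔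
      ∃ σ : Finset (Fin n), σ.Nonempty ∧ (G.induce (σ : Set (Fin n))).Connected ∧
        ∀ i ∈ σ, doutDeg G σ i < b i := by
  classical
  have hgen : {f | ∃ σ : Finset (Fin n), σ.Nonempty ∧ (G.induce (σ : Set (Fin n))).Connected ∧
      f = ∏ i ∈ σ, (X i : MvPolynomial (Fin n) K) ^ (doutDeg G σ i + 1)} =
      (fun s => monomial s (1 : K)) ''
        ((fun σ => Finsupp.indicator σ fun i _ => doutDeg G σ i + 1) ''
          {σ | σ.Nonempty ∧ (G.induce (σ : Set (Fin n))).Connected}) := by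
    ext f
    simp [prod_X_pow, eq_comm, and_assoc]
  rw [treeIdeal, hgen, mem_ideal_span_monomial_image, prod_X_pow, support_monomial,
    if_neg one_ne_zero]
  simp only [Finset.mem_singleton, forall_eq, Set.mem_image, Set.mem_ofPred_eq, Finsupp.le_def,
    Finsupp.indicator_apply, Finset.mem_univ, dite_true]
  constructor
  · rintro ⟨_, ⟨σ, ⟨hσ, hconn⟩, rfl⟩, h⟩
    exact ⟨σ, hσ, hconn, fun i hi => by simpa [hi] using h i⟩
  · rintro ⟨σ, hσ, hconn, h⟩
    refine ⟨_, ⟨σ, ⟨hσ, hconn⟩, rfl⟩, fun i => ?_⟩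
    rw [Finsupp.indicator_apply]
    split_ifs with hi
    exacts [h i hi, Nat.zero_le _]

/-- A maximal connected subset `σ` of `S` (a component of `G[S]`) has no neighbours in `S ∖ σ`. -/
lemma exists_connected_subset_doutDeg_le {S : Finset (Fin n)} (hS : S.Nonempty) :
    ∃ σ ⊆ S, σ.Nonempty ∧ (G.induce (σ : Set (Fin n))).Connected ∧
      ∀ i ∈ σ, doutDeg G σ i ≤ doutDeg G S i := by
  obtain ⟨v, hv⟩ := hS
  have hsingleton : (G.induce ((({v} : Finset (Fin n))) : Set (Fin n))).Connected := by
    rw [Finset.coe_singleton]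
    exact { preconnected := .of_subsingleton, nonempty := ⟨⟨v, rfl⟩⟩ }
  obtain ⟨σ, ⟨hσS, hσ, hconn⟩, hmax⟩ := Set.Finite.exists_maximal
    (s := {σ : Finset (Fin n) | σ ⊆ S ∧ σ.Nonempty ∧ (G.induce (σ : Set (Fin n))).Connected})
    (Set.toFinite _) ⟨{v}, by simpa using hv, Finset.singleton_nonempty v, hsingleton⟩
  refine ⟨σ, hσS, hσ, hconn, fun i hi => Set.ncard_le_ncard fun j ⟨hjσ, hij⟩ => ⟨fun hjS => ?_, hij⟩⟩
  have hinsert : insert j σ ⊆ S ∧ (insert j σ).Nonempty ∧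
      (G.induce ((insert j σ : Finset (Fin n)) : Set (Fin n))).Connected := by
    refine ⟨Finset.insert_subset hjS hσS, Finset.insert_nonempty j σ, ?_⟩
    rw [Finset.coe_insert]
    exact SimpleGraph.connected_induce_insert hconn hi hij
  exact hjσ (hmax hinsert (Finset.subset_insert j σ) (Finset.mem_insert_self j σ))

lemma exists_outDeg_le_doutDeg (hO : IsOrientation G O) (hac : IsAcyclicRel O)
    {σ : Finset (Fin n)} (hσ : σ.Nonempty) : ∃ i ∈ σ, outDeg O i ≤ doutDeg G σ i := by
  obtain ⟨i, hi, hsink⟩ := hac.exists_sink (s := σ) hσ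
  exact ⟨i, hi, Set.ncard_le_ncard fun j hij => ⟨fun hj => hsink j hj hij, hO.1 i j hij⟩⟩

lemma exists_outDeg_lt_of_prod_X_pow_mem {K : Type*} [Field K] (hO : IsOrientation G O)
    (hac : IsAcyclicRel O) {b : Fin n → ℕ}
    (hb : ∏ i, (X i : MvPolynomial (Fin n) K) ^ b i ∈ treeIdeal n G K) : ∃ i, outDeg O i < b i := by
  obtain ⟨σ, hσ, -, hlt⟩ := (prod_X_pow_mem_treeIdeal_iff K b).1 hb
  obtain ⟨i, hi, hsink⟩ := exists_outDeg_le_doutDeg hO hac hσ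
  exact ⟨i, hsink.trans_lt (hlt i hi)⟩

lemma exists_le_doutDeg_of_prod_X_pow_notMem {K : Type*} [Field K] {a : Fin n → ℕ}
    (ha : ∏ i, (X i : MvPolynomial (Fin n) K) ^ a i ∉ treeIdeal n G K) {S : Finset (Fin n)}
    (hS : S.Nonempty) : ∃ v ∈ S, a v ≤ doutDeg G S v := by
  obtain ⟨σ, hσS, hσ, hconn, hle⟩ := exists_connected_subset_doutDeg_le hS
  by_contra! h
  exact ha ((prod_X_pow_mem_treeIdeal_iff K a).2
    ⟨σ, hσ, hconn, fun i hi => (hle i hi).trans_lt (h i (hσS hi))⟩)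

lemma exists_connected_doutDeg_lt_outDeg_add_single (hO : IsOrientation G O) (i₀ : Fin n) :
    ∃ σ : Finset (Fin n), σ.Nonempty ∧ (G.induce (σ : Set (Fin n))).Connected ∧
      ∀ i ∈ σ, doutDeg G σ i < (outDeg O + Pi.single i₀ 1 : Fin n → ℕ) i := by
  classical
  set σ := Finset.univ.filter (ReflTransGen O · i₀)
  have hmem {i : Fin n} : i ∈ σ ↔ ReflTransGen O i i₀ := by simp [σ]
  have hi₀ : i₀ ∈ σ := hmem.2 .refl
  have hout (i) (hi : i ∈ σ) : {j | j ∉ σ ∧ G.Adj i j} ⊆ {j | O i j} := fun j ⟨hj, hij⟩ =>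
    by_contra fun h => hj (hmem.2 (.head (hO.rel_swap_of_not_rel hij h) (hmem.1 hi)))
  refine ⟨σ, ⟨i₀, hi₀⟩, ?_, fun i hi => ?_⟩
  · refine (SimpleGraph.connected_iff_exists_forall_reachable _).mpr ⟨⟨i₀, hi₀⟩, fun ⟨i, hi⟩ => ?_⟩
    suffices ∀ i (h : ReflTransGen O i i₀), (G.induce (σ : Set (Fin n))).Reachable
        ⟨i, hmem.2 h⟩ ⟨i₀, hi₀⟩ from (this i (hmem.1 hi)).symm
    intro i h
    induction h using ReflTransGen.head_induction_on with
    | refl => rfl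
    | head hic hc ih =>
      have hadj : (G.induce (σ : Set (Fin n))).Adj ⟨_, hmem.2 (.head hic hc)⟩ ⟨_, hmem.2 hc⟩ :=
        hO.1 _ _ hic
      exact hadj.reachable.trans ih
  · rcases eq_or_ne i i₀ with rfl | hne
    · simpa [doutDeg, outDeg, Nat.lt_succ_iff] using Set.ncard_le_ncard (hout i hi)
    · obtain ⟨c, hic, hc⟩ := (hmem.1 hi).cases_head.resolve_left hne
      simpa [doutDeg, outDeg, hne] using
        Set.ncard_lt_ncard ⟨hout i hi, fun h => (h hic).1 (hmem.2 hc)⟩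

/-- Peel off, one at a time, vertices `v` of the remaining set `S` with `a v ≤ doutDeg G S v`;
ranking the vertices in the reverse order of removal gives every `i` at least `a i` lower
neighbours. -/
lemma exists_injective_rank_le_outDeg {a : Fin n → ℕ}
    (h : ∀ S : Finset (Fin n), S.Nonempty → ∃ v ∈ S, a v ≤ doutDeg G S v) :
    ∃ r : Fin n → ℕ, Function.Injective r ∧ ∀ i, a i ≤ outDeg (rankOrientation G r) i := by
  suffices ∀ S : Finset (Fin n), ∃ r : Fin n → ℕ, Set.InjOn r S ∧
      ∀ i ∈ S, a i ≤ {j | G.Adj i j ∧ (j ∉ S ∨ r j < r i)}.ncard by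
    obtain ⟨r, hr, hle⟩ := this Finset.univ
    refine ⟨r, by simpa using hr, fun i => (hle i (Finset.mem_univ i)).trans_eq ?_⟩
    simp [outDeg, rankOrientation]
  intro S
  induction S using Finset.strongInduction with
  | _ S ih =>
  rcases S.eq_empty_or_nonempty with rfl | hS
  · exact ⟨0, by simp, by simp⟩
  obtain ⟨v, hv, hav⟩ := h S hS
  obtain ⟨r, hr, hle⟩ := ih (S.erase v) (Finset.erase_ssubset hv)
  refine ⟨fun i => if i = v then 0 else r i + 1, fun i hi j hj hij => ?_, fun i hi => ?_⟩
  · by_cases hiv : i = v <;> by_cases hjv : j = v <;> simp only [hiv, hjv, if_true, if_false] at hij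
    · exact hiv.trans hjv.symm
    · omega
    · omega
    · exact hr (Finset.mem_erase.2 ⟨hiv, hi⟩) (Finset.mem_erase.2 ⟨hjv, hj⟩) (by omega)
  by_cases hiv : i = v
  · subst hiv
    exact hav.trans (Set.ncard_le_ncard fun j hj => ⟨hj.2, .inl hj.1⟩)
  refine (hle i (Finset.mem_erase.2 ⟨hiv, hi⟩)).trans (Set.ncard_le_ncard fun j hj => ⟨hj.1, ?_⟩)
  by_cases hjv : j = v
  · simp [hjv, hiv]
  · simpa [hjv, hiv] using hj.2

end TreeIdeal

/-- `x^a` is a standard monomial of `T_G` maximal under divisibility iff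
`a` is the out-degree vector of an acyclic orientation of `G`; moreover distinct
acyclic orientations have distinct out-degree vectors. -/
theorem stmt9 (n : ℕ) (G : SimpleGraph (Fin n)) (K : Type*) [Field K] (a : Fin n → ℕ) :
    (((∏ i, (X i : MvPolynomial (Fin n) K) ^ a i) ∉ treeIdeal n G K ∧
      ∀ i₀ : Fin n,
        (∏ i, (X i : MvPolynomial (Fin n) K) ^ ((a + Pi.single i₀ 1 : Fin n → ℕ) i)) ∈ treeIdeal n G K) ↔
      ∃ O : Fin n → Fin n → Prop, IsOrientation G O ∧ IsAcyclicRel O ∧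
        ∀ i, a i = outDeg O i) ∧
    (∀ O O' : Fin n → Fin n → Prop,
      IsOrientation G O → IsAcyclicRel O → IsOrientation G O' → IsAcyclicRel O' →
      (∀ i, outDeg O i = outDeg O' i) → O = O') := by
  refine ⟨⟨fun ⟨hnot, hmem⟩ => ?_, ?_⟩, fun O O' hO hac hO' _ => hO.eq_of_outDeg_eq hO' hac⟩
  · obtain ⟨r, hr, hle⟩ :=
      exists_injective_rank_le_outDeg fun S hS => exists_le_doutDeg_of_prod_X_pow_notMem hnot hS
    have hO := isOrientation_rankOrientation (G := G) hr
    have hac := isAcyclicRel_rankOrientation (G := G) r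
    refine ⟨_, hO, hac, fun i₀ => (hle i₀).antisymm ?_⟩
    obtain ⟨i, hi⟩ := exists_outDeg_lt_of_prod_X_pow_mem hO hac (hmem i₀)
    rcases eq_or_ne i i₀ with rfl | hne
    · simpa [Nat.lt_succ_iff] using hi
    · simp only [Pi.add_apply, Pi.single_apply, hne, if_false, add_zero] at hi
      exact absurd (hle i) hi.not_ge
  · rintro ⟨O, hO, hac, ha⟩
    obtain rfl : a = outDeg O := funext ha
    refine ⟨fun hmem => ?_, fun i₀ => (prod_X_pow_mem_treeIdeal_iff K _).2
      (exists_connected_doutDeg_lt_outDeg_add_single hO i₀)⟩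
    obtain ⟨i, hi⟩ := exists_outDeg_lt_of_prod_X_pow_mem hO hac hmem
    exact hi.false
end
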